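/- arXiv:2308.06178 — 3 statements merged into one kernel-verified Lean document; each statement's English description precedes it below -/
import Mathlib

section
/- Let R_1, …, R_k be nonempty finite subsets of a finite set Λ, (p_x)_{x∈Λ} probability weights on I, and (J_{xy}) a symmetric family of reals. Define ξ_t({x}) = Σ_{s_x∈I}(e^{its_x}−1)p_x(s_x) and, for |R| ≥ 2, ξ_t(R) = Σ_{s_R∈I^R} Σ_{g∈G_R} Σ_{S⊂R} Π_{{x,y}∈E_g}(e^{J_{xy}s_xs_y}−1) Π_{x∈S}(e^{its_x}−1) Π_{x∈R} p_x(s_x). Then the real part of the derivative at t = 0 of the product vanishes: Re( d/dt [Π_{i=1}^k ξ_t(R_i)] |_{t=0} ) = 0. -/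
open Finset
open scoped Classical

namespace SpinLCLT

/-- The set of connected simple graphs on a finite vertex type `W`. -/
noncomputable def connGraphs (W : Type*) [Fintype W] : Finset (SimpleGraph W) :=
  Finset.univ.filter (fun g => g.Connected)

/-- The product over the edges `{x,y}` of a graph `g` of the Mayer factors
`e^{J_{xy} f(x) f(y)} − 1`. -/
noncomputable def edgeProd {W : Type*} [Fintype W] [DecidableEq W]
    (J : W → W → ℝ) (hJ : ∀ x y, J x y = J y x) (f : W → ℝ)
    (g : SimpleGraph W) : ℂ :=
  ∏ e ∈ g.edgeFinset,
    Sym2.lift ⟨fun x y => Complex.exp ((J x y * f x * f y : ℝ) : ℂ) - 1,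
      fun x y => by dsimp only; rw [hJ x y, mul_right_comm]⟩ e

/-- The polymer activity `ξ_t(R)`:
`ξ_t({x}) = Σ_{s∈I}(e^{its}−1)p_x(s)` and, for `|R| ≥ 2`,
`ξ_t(R) = Σ_{s_R∈I^R} Σ_{g∈G_R} Σ_{S⊆R} Π_{{x,y}∈E_g}(e^{J_{xy}s_xs_y}−1)
Π_{x∈S}(e^{its_x}−1) Π_{x∈R} p_x(s_x)`, where `I = Finset.Icc a b`. -/
noncomputable def xi (a b : ℤ) {V : Type*} [DecidableEq V] (p : V → ℤ → ℝ)
    (J : V → V → ℝ) (hJ : ∀ x y, J x y = J y x) (R : Finset V) (t : ℝ) : ℂ :=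
  if R.card = 1 then
    ∑ x ∈ R, ∑ z ∈ Finset.Icc a b,
      (Complex.exp (Complex.I * t * z) - 1) * (p x z : ℂ)
  else
    ∑ s ∈ Fintype.piFinset (fun _ : ↥R => Finset.Icc a b),
      ∑ g ∈ connGraphs ↥R,
        ∑ S ∈ (Finset.univ : Finset ↥R).powerset,
          (edgeProd (fun x y : ↥R => J ↑x ↑y) (fun x y => hJ ↑x ↑y)
              (fun x : ↥R => (s x : ℝ)) g) *
            (∏ x ∈ S, (Complex.exp (Complex.I * t * (s x : ℤ)) - 1)) *
            (∏ x : ↥R, (p ↑x (s x) : ℂ))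

/-- The weight `w₀(R)`: `w₀({x}) = δσ` and, for `|R| ≥ 2`,
`w₀(R) = (1+δσ)^{|R|} Σ_{s_R∈I^R} Π_{x∈R} p_x(s_x) ·
|Σ_{g∈G_R} Π_{{x,y}∈E_g}(e^{J_{xy}s_xs_y}−1)|`. -/
noncomputable def w0 (a b : ℤ) {V : Type*} [DecidableEq V] (δ σ : ℝ)
    (p : V → ℤ → ℝ) (J : V → V → ℝ) (hJ : ∀ x y, J x y = J y x)
    (R : Finset V) : ℝ :=
  if R.card = 1 then δ * σ
  else (1 + δ * σ) ^ R.card *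
    ∑ s ∈ Fintype.piFinset (fun _ : ↥R => Finset.Icc a b),
      (∏ x : ↥R, p ↑x (s x)) *
        ‖(∑ g ∈ connGraphs ↥R,
          edgeProd (fun x y : ↥R => J ↑x ↑y) (fun x y => hJ ↑x ↑y)
            (fun x : ↥R => (s x : ℝ)) g)‖


/-!
All weights `p`, `J` and Mayer factors are real, so conjugating `ξ_t(R)` only flips the sign of
`t` in the factors `e^{its} - 1`: `conj ξ_t(R) = ξ_{-t}(R)`. Hence `F(t) = ∏ᵢ ξ_t(Rᵢ)` satisfies
`F(-t) = conj F(t)`, and differentiating at `0` gives `-F'(0) = conj F'(0)`.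
-/

theorem re_deriv_zero_eq_zero_of_apply_neg_eq_conj {f : ℝ → ℂ}
    (hf : ∀ t, f (-t) = starRingEnd ℂ (f t)) : (deriv f 0).re = 0 := by
  have h : -deriv f 0 = starRingEnd ℂ (deriv f 0) :=
    calc -deriv f 0 = deriv (fun t => f (-t)) 0 := by rw [deriv_comp_neg, neg_zero]
      _ = deriv (fun t => star (f t)) 0 := by simp_rw [hf]; rfl
      _ = starRingEnd ℂ (deriv f 0) := deriv.star
  have hre := congrArg Complex.re h
  rw [Complex.neg_re, Complex.conj_re] at hre
  linarith

lemma conj_exp_I_mul_sub_one (t : ℝ) (z : ℤ) :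
    starRingEnd ℂ (Complex.exp (Complex.I * t * z) - 1)
      = Complex.exp (Complex.I * ((-t : ℝ) : ℂ) * z) - 1 := by
  rw [map_sub, map_one, ← Complex.exp_conj]
  simp only [map_mul, Complex.conj_I, Complex.conj_ofReal, map_intCast, Complex.ofReal_neg]
  ring_nf

lemma conj_edgeProd {W : Type*} [Fintype W] [DecidableEq W]
    (J : W → W → ℝ) (hJ : ∀ x y, J x y = J y x) (f : W → ℝ) (g : SimpleGraph W) :
    starRingEnd ℂ (edgeProd J hJ f g) = edgeProd J hJ f g := by
  rw [edgeProd, map_prod]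
  refine Finset.prod_congr rfl fun e _ => ?_
  induction e using Sym2.ind with
  | _ x y =>
    simp only [Sym2.lift_mk, map_sub, map_one, ← Complex.exp_conj, Complex.conj_ofReal]

lemma conj_xi (a b : ℤ) {V : Type*} [DecidableEq V] (p : V → ℤ → ℝ)
    (J : V → V → ℝ) (hJ : ∀ x y, J x y = J y x) (R : Finset V) (t : ℝ) :
    starRingEnd ℂ (xi a b p J hJ R t) = xi a b p J hJ R (-t) := by
  unfold xi
  split_ifs
  · simp only [map_sum, map_mul, Complex.conj_ofReal, conj_exp_I_mul_sub_one]
  · simp only [map_sum, map_mul, map_prod, conj_edgeProd, Complex.conj_ofReal,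
      conj_exp_I_mul_sub_one]

theorem re_deriv_prod_xi_at_zero_general
    (a b : ℤ) {V : Type*} [DecidableEq V]
    (p : V → ℤ → ℝ)
    (J : V → V → ℝ) (hJ : ∀ x y, J x y = J y x)
    (k : ℕ) (R : Fin k → Finset V) :
    (deriv (fun t : ℝ => ∏ i : Fin k, xi a b p J hJ (R i) t) 0).re = 0 :=
  re_deriv_zero_eq_zero_of_apply_neg_eq_conj fun t => by
    simp only [map_prod, conj_xi]

/-- For nonempty subsets `R_1,…,R_k` of a finite set `Λ`,
probability weights `(p_x)` and symmetric `(J_{xy})`, the real part of the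
derivative at `t = 0` of `Π_{i=1}^k ξ_t(R_i)` vanishes. -/
theorem re_deriv_prod_xi_at_zero
    (a b : ℤ) (hab : a < b) {V : Type*} [DecidableEq V]
    (Λ : Finset V)
    (p : V → ℤ → ℝ)
    (hp0 : ∀ x, ∀ z ∈ Finset.Icc a b, 0 ≤ p x z)
    (hp1 : ∀ x, ∑ z ∈ Finset.Icc a b, p x z = 1)
    (J : V → V → ℝ) (hJ : ∀ x y, J x y = J y x)
    (k : ℕ) (R : Fin k → Finset V)
    (hRne : ∀ i, (R i).Nonempty) (hRsub : ∀ i, R i ⊆ Λ) :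
    (deriv (fun t : ℝ => ∏ i : Fin k, xi a b p J hJ (R i) t) 0).re = 0 :=
  re_deriv_prod_xi_at_zero_general a b p J hJ k R

end SpinLCLT
end

section
/- Let Λ̃ be a finite set, (p_x)_{x∈Λ̃} probability weights on I, (J_{xy}) a symmetric family of reals, t ∈ ℝ, and c > 0. Suppose |Σ_{s∈I} e^{its} p_x(s)| ≤ e^{−c} for every x ∈ Λ̃. Then |Ξ(t)| ≤ e^{−c|Λ̃|} · Σ_{g∈𝒢_{Λ̃}} e^{c|S_g|} | Σ_{s_{S_g}∈I^{S_g}} Π_{x∈S_g} e^{its_x} p_x(s_x) Π_{{x,y}∈E_g}(e^{J_{xy}s_xs_y}−1) |, where Ξ(t) = Σ_{s∈I^{Λ̃}} Π_{{x,y}⊂Λ̃} e^{J_{xy}s_xs_y} Π_{x∈Λ̃} e^{its_x} p_x(s_x). -/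
open Finset
open scoped Classical

namespace SpinLCLT

/-- The set of non-isolated vertices `S_g = ∪_{{x,y}∈E_g} {x,y}` of a graph `g`. -/
noncomputable def nonIsolated {W : Type*} [Fintype W] (g : SimpleGraph W) :
    Finset W :=
  Finset.univ.filter (fun x => ∃ y, g.Adj x y)

/-! Expanding every Boltzmann factor as `1 + (e^{J_{xy} s_x s_y} - 1)` turns `Ξ(t)` into a sum over
graphs `g`. For a fixed `g` the spins off `S_g` no longer interact, so their sums factor out as
single-site characteristic functions, each of modulus at most `e^{-c}`. -/

theorem sum_offDiag_sym2_eq_two_nsmul {W M : Type*} [Fintype W] [DecidableEq W]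
    [AddCommMonoid M] (f : Sym2 W → M) :
    ∑ q ∈ (univ : Finset W).offDiag, f s(q.1, q.2) =
      2 • ∑ e ∈ (⊤ : SimpleGraph W).edgeFinset, f e := by
  rw [← sum_fiberwise_of_maps_to (g := fun q : W × W => s(q.1, q.2))
    (t := (⊤ : SimpleGraph W).edgeFinset) (by simp), smul_sum]
  refine sum_congr rfl fun e he => ?_
  induction e using Sym2.ind with
  | _ x y =>
    have hxy : x ≠ y := by simpa using he
    have hfiber : {q ∈ (univ : Finset W).offDiag | s(q.1, q.2) = s(x, y)} =
        {(x, y), (y, x)} := by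
      ext ⟨u, v⟩
      simp only [mem_filter, mem_offDiag, mem_univ, true_and, Sym2.eq, Sym2.rel_iff',
        Prod.mk.injEq, Prod.swap_prod_mk, mem_insert, mem_singleton]
      aesop
    rw [hfiber, sum_pair (by simp [hxy]), Sym2.eq_swap, two_nsmul]

theorem sum_prod_edgeFinset_eq_prod_one_add {W R : Type*} [Fintype W] [DecidableEq W]
    [CommSemiring R] (h : Sym2 W → R) :
    ∑ g : SimpleGraph W, ∏ e ∈ g.edgeFinset, h e =
      ∏ e ∈ (⊤ : SimpleGraph W).edgeFinset, (1 + h e) := by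
  have edgeFinset_fromEdgeSet : ∀ t ∈ (⊤ : SimpleGraph W).edgeFinset.powerset,
      (SimpleGraph.fromEdgeSet (t : Set (Sym2 W))).edgeFinset = t := by
    intro t ht
    rw [mem_powerset] at ht
    ext e
    have he := @ht e
    simp only [SimpleGraph.mem_edgeFinset, SimpleGraph.edgeSet_fromEdgeSet, Set.mem_sdiff,
      mem_coe, SimpleGraph.edgeSet_top] at he ⊢
    aesop
  rw [prod_one_add]
  exact sum_nbij' (fun g => g.edgeFinset) (fun t => SimpleGraph.fromEdgeSet t)
    (fun g _ => mem_powerset.2 (SimpleGraph.edgeFinset_mono le_top)) (fun _ _ => mem_univ _)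
    (fun g _ => by simp) (fun t ht => by convert edgeFinset_fromEdgeSet t ht) (fun _ _ => rfl)

theorem exp_half_sum_offDiag_eq_sum_edgeProd {W : Type*} [Fintype W] [DecidableEq W]
    (J : W → W → ℝ) (hJ : ∀ x y, J x y = J y x) (f : W → ℝ) :
    Complex.exp (((1 / 2 : ℝ) *
        ∑ q ∈ (univ : Finset W).offDiag, J q.1 q.2 * f q.1 * f q.2 : ℝ) : ℂ) =
      ∑ g : SimpleGraph W, edgeProd J hJ f g := by
  let w : Sym2 W → ℝ :=
    Sym2.lift ⟨fun x y => J x y * f x * f y, fun x y => by dsimp only; rw [hJ]; ring⟩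
  have hsum : ∑ q ∈ (univ : Finset W).offDiag, J q.1 q.2 * f q.1 * f q.2 =
      2 • ∑ e ∈ (⊤ : SimpleGraph W).edgeFinset, w e :=
    sum_offDiag_sym2_eq_two_nsmul w
  rw [hsum, two_nsmul, ← two_mul, one_div, inv_mul_cancel_left₀ two_ne_zero,
    Complex.ofReal_sum, Complex.exp_sum]
  unfold edgeProd
  rw [sum_prod_edgeFinset_eq_prod_one_add]
  refine prod_congr rfl fun e _ => ?_
  induction e using Sym2.ind with
  | _ x y => simp [w]

theorem sum_piFinset_mul_prod_compl {W α R : Type*} [Fintype W] [DecidableEq W]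
    [CommSemiring R] (I : Finset α) (S : Finset W) (A : ((x : W) → x ∈ S → α) → R)
    (k : W → α → R) :
    ∑ s ∈ Fintype.piFinset (fun _ : W => I), A (fun x _ => s x) * ∏ x ∈ Sᶜ, k x (s x) =
      (∑ f ∈ S.pi (fun _ => I), A f) * ∏ x ∈ Sᶜ, ∑ z ∈ I, k x z := by
  rw [prod_sum, sum_mul_sum, ← sum_product']
  refine sum_nbij' (fun s => (fun x _ => s x, fun x _ => s x))
    (fun q x => if hx : x ∈ S then q.1 x hx else q.2 x (mem_compl.2 hx)) ?_ ?_ ?_ ?_ ?_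
  · intro s hs
    simp only [Fintype.mem_piFinset] at hs
    simp [hs]
  · rintro ⟨f, h⟩ hfh
    simp only [mem_product, mem_pi] at hfh
    simp only [Fintype.mem_piFinset]
    intro x
    split_ifs with hx
    exacts [hfh.1 x hx, hfh.2 x _]
  · intro s _
    funext x
    split_ifs <;> rfl
  · rintro ⟨f, h⟩ _
    ext x hx
    · simp [hx]
    · simp [mem_compl.1 hx]
  · intro s _
    rw [prod_attach Sᶜ (fun x => k x (s x))]

theorem mem_nonIsolated {W : Type*} [Fintype W] {g : SimpleGraph W} {x : W} :
    x ∈ nonIsolated g ↔ ∃ y, g.Adj x y := by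
  simp [nonIsolated]

theorem edgeProd_congr {W : Type*} [Fintype W] [DecidableEq W]
    (J : W → W → ℝ) (hJ : ∀ x y, J x y = J y x) (g : SimpleGraph W)
    {f₁ f₂ : W → ℝ} (h : ∀ x ∈ nonIsolated g, f₁ x = f₂ x) :
    edgeProd J hJ f₁ g = edgeProd J hJ f₂ g := by
  refine prod_congr rfl fun e he => ?_
  induction e using Sym2.ind with
  | _ x y =>
    rw [SimpleGraph.mem_edgeFinset, SimpleGraph.mem_edgeSet] at he
    simp only [Sym2.lift_mk]
    rw [h x (mem_nonIsolated.2 ⟨y, he⟩), h y (mem_nonIsolated.2 ⟨x, he.symm⟩)]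

theorem sum_edgeProd_mul_prod_eq {W : Type*} [Fintype W] [DecidableEq W]
    (J : W → W → ℝ) (hJ : ∀ x y, J x y = J y x) (g : SimpleGraph W) (I : Finset ℤ)
    (φ : W → ℤ → ℂ) :
    ∑ s ∈ Fintype.piFinset (fun _ : W => I),
        edgeProd J hJ (fun x => (s x : ℝ)) g * ∏ x, φ x (s x) =
      (∑ f ∈ (nonIsolated g).pi (fun _ => I),
          (∏ x ∈ (nonIsolated g).attach, φ x (f x.1 x.2)) *
            edgeProd J hJ
              (fun x => if hx : x ∈ nonIsolated g then ((f x hx : ℤ) : ℝ) else 0) g) *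
        ∏ x ∈ (nonIsolated g)ᶜ, ∑ z ∈ I, φ x z := by
  rw [← sum_piFinset_mul_prod_compl]
  refine sum_congr rfl fun s _ => ?_
  rw [← prod_mul_prod_compl (nonIsolated g), ← mul_assoc, mul_comm (edgeProd _ _ _ _),
    prod_attach (nonIsolated g) (fun x => φ x (s x))]
  congr 2
  exact edgeProd_congr J hJ g fun x hx => by simp [hx]

theorem norm_prod_compl_le_exp {W 𝕜 : Type*} [Fintype W] [DecidableEq W]
    [NormedCommRing 𝕜] [NormOneClass 𝕜] (S : Finset W) (u : W → 𝕜) {c : ℝ}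
    (hu : ∀ x ∈ Sᶜ, ‖u x‖ ≤ Real.exp (-c)) :
    ‖∏ x ∈ Sᶜ, u x‖ ≤ Real.exp (-(c * Fintype.card W)) * Real.exp (c * #S) := by
  calc ‖∏ x ∈ Sᶜ, u x‖ ≤ ∏ x ∈ Sᶜ, ‖u x‖ := Finset.norm_prod_le _ _
    _ ≤ ∏ _x ∈ Sᶜ, Real.exp (-c) := prod_le_prod (fun _ _ => norm_nonneg _) hu
    _ = Real.exp (-(c * Fintype.card W)) * Real.exp (c * #S) := by
      rw [prod_const, ← Real.exp_nat_mul, ← Real.exp_add, card_compl,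
        Nat.cast_sub (card_le_univ S)]
      ring_nf

theorem abs_Xi_le_decoupled_bound_general
    (a b : ℤ) {V : Type*} [DecidableEq V]
    (Λ : Finset V)
    (p : V → ℤ → ℝ)
    (J : V → V → ℝ) (hJ : ∀ x y, J x y = J y x)
    (t : ℝ) (c : ℝ)
    (hsmall : ∀ x : ↥Λ,
      ‖(∑ z ∈ Finset.Icc a b,
          Complex.exp (Complex.I * t * z) * (p ↑x z : ℂ))‖ ≤ Real.exp (-c)) :
    ‖
        (∑ s ∈ Fintype.piFinset (fun _ : ↥Λ => Finset.Icc a b),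
          Complex.exp (((1 / 2 : ℝ) *
              ∑ q ∈ (Finset.univ : Finset ↥Λ).offDiag,
                J ↑q.1 ↑q.2 * (s q.1 : ℝ) * (s q.2 : ℝ) : ℝ)) *
            ∏ x : ↥Λ, (Complex.exp (Complex.I * t * (s x : ℤ)) * (p ↑x (s x) : ℂ)))‖ ≤
      Real.exp (-(c * (Λ.card : ℝ))) *
        ∑ g : SimpleGraph ↥Λ,
          Real.exp (c * ((nonIsolated g).card : ℝ)) *
            ‖
              (∑ f ∈ (nonIsolated g).pi (fun _ => Finset.Icc a b),
                (∏ x ∈ (nonIsolated g).attach,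
                    Complex.exp (Complex.I * t * (f x.1 x.2 : ℤ)) *
                      (p ↑(x.1) (f x.1 x.2) : ℂ)) *
                  edgeProd (fun x y : ↥Λ => J ↑x ↑y) (fun x y => hJ ↑x ↑y)
                    (fun x : ↥Λ =>
                      if hx : x ∈ nonIsolated g then ((f x hx : ℤ) : ℝ) else 0) g)‖ := by
  let φ : ↥Λ → ℤ → ℂ := fun x z => Complex.exp (Complex.I * t * z) * (p x z : ℂ)
  calc _ = ‖∑ g : SimpleGraph ↥Λ, ∑ s ∈ Fintype.piFinset (fun _ : ↥Λ => Finset.Icc a b),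
        edgeProd (fun x y : ↥Λ => J x y) (fun x y => hJ x y) (fun x => (s x : ℝ)) g *
          ∏ x, φ x (s x)‖ := by
        rw [sum_comm]
        congr 1
        refine sum_congr rfl fun s _ => ?_
        rw [exp_half_sum_offDiag_eq_sum_edgeProd (fun x y : ↥Λ => J x y) (fun x y => hJ x y)
          (fun x => (s x : ℝ)), sum_mul]
    _ ≤ ∑ g : SimpleGraph ↥Λ, ‖∑ s ∈ Fintype.piFinset (fun _ : ↥Λ => Finset.Icc a b),
        edgeProd (fun x y : ↥Λ => J x y) (fun x y => hJ x y) (fun x => (s x : ℝ)) g *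
          ∏ x, φ x (s x)‖ := norm_sum_le _ _
    _ ≤ _ := by
        rw [mul_sum]
        refine sum_le_sum fun g _ => ?_
        rw [sum_edgeProd_mul_prod_eq, norm_mul, ← Fintype.card_coe Λ]
        exact (mul_le_mul_of_nonneg_left (norm_prod_compl_le_exp _ _ fun x _ => hsmall x)
          (norm_nonneg _)).trans_eq (by ring)

/-- If `|Σ_{s∈I} e^{its} p_x(s)| ≤ e^{−c}` for every `x ∈ Λ̃`,
then
`|Ξ(t)| ≤ e^{−c|Λ̃|} Σ_{g∈𝒢_Λ̃} e^{c|S_g|} |Σ_{s_{S_g}∈I^{S_g}}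
Π_{x∈S_g} e^{its_x}p_x(s_x) Π_{{x,y}∈E_g}(e^{J_{xy}s_xs_y}−1)|`,
where `Ξ(t) = Σ_{s∈I^Λ̃} Π_{{x,y}⊂Λ̃} e^{J_{xy}s_xs_y} Π_{x∈Λ̃} e^{its_x} p_x(s_x)`
(the product over unordered pairs being written as the exponential of half the
sum over ordered pairs of distinct points, as `J` is symmetric). -/
theorem abs_Xi_le_decoupled_bound
    (a b : ℤ) (hab : a < b) {V : Type*} [DecidableEq V]
    (Λ : Finset V)
    (p : V → ℤ → ℝ)
    (hp0 : ∀ x, ∀ z ∈ Finset.Icc a b, 0 ≤ p x z)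
    (hp1 : ∀ x, ∑ z ∈ Finset.Icc a b, p x z = 1)
    (J : V → V → ℝ) (hJ : ∀ x y, J x y = J y x)
    (t : ℝ) (c : ℝ) (hc : 0 < c)
    (hsmall : ∀ x : ↥Λ,
      ‖(∑ z ∈ Finset.Icc a b,
          Complex.exp (Complex.I * t * z) * (p ↑x z : ℂ))‖ ≤ Real.exp (-c)) :
    ‖
        (∑ s ∈ Fintype.piFinset (fun _ : ↥Λ => Finset.Icc a b),
          Complex.exp (((1 / 2 : ℝ) *
              ∑ q ∈ (Finset.univ : Finset ↥Λ).offDiag,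
                J ↑q.1 ↑q.2 * (s q.1 : ℝ) * (s q.2 : ℝ) : ℝ)) *
            ∏ x : ↥Λ, (Complex.exp (Complex.I * t * (s x : ℤ)) * (p ↑x (s x) : ℂ)))‖ ≤
      Real.exp (-(c * (Λ.card : ℝ))) *
        ∑ g : SimpleGraph ↥Λ,
          Real.exp (c * ((nonIsolated g).card : ℝ)) *
            ‖
              (∑ f ∈ (nonIsolated g).pi (fun _ => Finset.Icc a b),
                (∏ x ∈ (nonIsolated g).attach,
                    Complex.exp (Complex.I * t * (f x.1 x.2 : ℤ)) *
                      (p ↑(x.1) (f x.1 x.2) : ℂ)) *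
                  edgeProd (fun x y : ↥Λ => J ↑x ↑y) (fun x y => hJ ↑x ↑y)
                    (fun x : ↥Λ =>
                      if hx : x ∈ nonIsolated g then ((f x hx : ℤ) : ℝ) else 0) g)‖ :=
  abs_Xi_le_decoupled_bound_general a b Λ p J hJ t c hsmall

end SpinLCLT
end

section
/- Let R_1, …, R_k be nonempty subsets of a finite set Λ, (p_x)_{x∈Λ} probability weights on I, (J_{xy}) a symmetric family of reals, σ = max_{s∈I}|s| ≥ 1, and 0 < δ < 1. Define ξ_t(R) and w_0(R) as follows: ξ_t({x}) = Σ_{s∈I}(e^{its}−1)p_x(s) and w_0({x}) = δσ; for |R| ≥ 2, ξ_t(R) = Σ_{s_R∈I^R} Σ_{g∈G_R} Σ_{S⊂R} Π_{{x,y}∈E_g}(e^{J_{xy}s_xs_y}−1) Π_{x∈S}(e^{its_x}−1) Π_{x∈R} p_x(s_x) and w_0(R) = (1+δσ)^{|R|} Σ_{s_R∈I^R} Π_{x∈R} p_x(s_x)|Σ_{g∈G_R} Π_{{x,y}∈E_g}(e^{J_{xy}s_xs_y}−1)|. Then for every t with 0 < t ≤ δ, | d²/dt² [Π_{i=1}^k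 ξ_t(R_i)] | ≤ (σ²/δ²) Π_{i=1}^k ( e^{|R_i|} w_0(R_i) ). -/
open Finset
open scoped Classical

namespace SpinLCLT

/-!
Each activity `ξ_t(R)` is a trigonometric polynomial `∑ c_s e^{itμ_s}` in `t`: for `|R| ≥ 2`
the sum over `S ⊆ R` collapses to `∏_{x∈R} e^{its_x} = e^{it∑ s_x}`, so the frequencies satisfy
`|μ_s| ≤ σ|R|` and `∑ |c_s|` is the sum in `w₀(R)`. Hence its `j`-th derivative is at most
`(σ|R|/δ)^j w₀(R)` for `j ≤ 2`; for a singleton the value is at most `tσ ≤ δσ` since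
`|e^{itz} - 1| ≤ |tz|`. Bounds of the form `‖f^{(j)}(t)‖ ≤ β^j A`, `j ≤ 2`, are multiplicative
with the rates `β` adding (Leibniz rule), so the product has second derivative at most
`(σ/δ)² N² ∏ w₀(R_i)` with `N = ∑ |R_i|`, and `N² ≤ e^N`.
-/

structure TwoJetBound (f : ℝ → ℂ) (t A β : ℝ) : Prop where
  differentiable : Differentiable ℝ f
  differentiable_deriv : Differentiable ℝ (deriv f)
  norm_le : ‖f t‖ ≤ A
  norm_deriv_le : ‖deriv f t‖ ≤ β * A
  norm_deriv_deriv_le : ‖deriv (deriv f) t‖ ≤ β ^ 2 * A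

namespace TwoJetBound

variable {f g : ℝ → ℂ} {t A A' β β' : ℝ}

lemma nonneg (hf : TwoJetBound f t A β) : 0 ≤ A :=
  (norm_nonneg _).trans hf.norm_le

lemma mono (hf : TwoJetBound f t A β) (hβ0 : 0 ≤ β) (hβ : β ≤ β') (hA : A ≤ A') :
    TwoJetBound f t A' β' := by
  have hA0 := hf.nonneg
  refine ⟨hf.differentiable, hf.differentiable_deriv, hf.norm_le.trans hA,
    hf.norm_deriv_le.trans (by gcongr; linarith), hf.norm_deriv_deriv_le.trans (by gcongr)⟩

lemma one (t : ℝ) : TwoJetBound (fun _ => 1) t 1 0 where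
  differentiable := differentiable_const 1
  differentiable_deriv := by simp
  norm_le := by simp
  norm_deriv_le := by simp
  norm_deriv_deriv_le := by simp

lemma mul (hf : TwoJetBound f t A β) (hg : TwoJetBound g t A' β') :
    TwoJetBound (fun u => f u * g u) t (A * A') (β + β') := by
  have hderiv : deriv (fun u => f u * g u) = fun u => deriv f u * g u + f u * deriv g u :=
    funext fun u => deriv_mul (hf.differentiable u) (hg.differentiable u)
  have hderiv2 : deriv (deriv (fun u => f u * g u)) t =
      deriv (deriv f) t * g t + 2 * (deriv f t * deriv g t) + f t * deriv (deriv g) t := by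
    rw [hderiv, deriv_fun_add (f := fun u => deriv f u * g u) (g := fun u => f u * deriv g u)
      ((hf.differentiable_deriv t).mul (hg.differentiable t))
      ((hf.differentiable t).mul (hg.differentiable_deriv t)),
      deriv_fun_mul (hf.differentiable_deriv t) (hg.differentiable t),
      deriv_fun_mul (hf.differentiable t) (hg.differentiable_deriv t)]
    ring
  have hA := hf.nonneg
  have hA' := hg.nonneg
  have hβA : 0 ≤ β * A := (norm_nonneg _).trans hf.norm_deriv_le
  have hβA' : 0 ≤ β' * A' := (norm_nonneg _).trans hg.norm_deriv_le
  refine ⟨hf.differentiable.mul hg.differentiable, ?_, ?_, ?_, ?_⟩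
  · rw [hderiv]
    exact (hf.differentiable_deriv.mul hg.differentiable).add
      (hf.differentiable.mul hg.differentiable_deriv)
  · rw [norm_mul]
    exact mul_le_mul hf.norm_le hg.norm_le (norm_nonneg _) hA
  · rw [hderiv]
    calc ‖deriv f t * g t + f t * deriv g t‖
        ≤ ‖deriv f t‖ * ‖g t‖ + ‖f t‖ * ‖deriv g t‖ := by
          simpa only [norm_mul] using norm_add_le (deriv f t * g t) (f t * deriv g t)
      _ ≤ β * A * A' + A * (β' * A') := by
          gcongr
          exacts [hf.norm_deriv_le, hg.norm_le, hf.norm_le, hg.norm_deriv_le]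
      _ = (β + β') * (A * A') := by ring
  · rw [hderiv2]
    calc _ ≤ ‖deriv (deriv f) t‖ * ‖g t‖ + 2 * (‖deriv f t‖ * ‖deriv g t‖)
            + ‖f t‖ * ‖deriv (deriv g) t‖ := by
          refine norm_add₃_le.trans ?_
          simp only [norm_mul, Complex.norm_ofNat, le_refl]
      _ ≤ β ^ 2 * A * A' + 2 * (β * A * (β' * A')) + A * (β' ^ 2 * A') := by
          gcongr
          exacts [hf.norm_deriv_deriv_le, hg.norm_le, hf.norm_deriv_le, hg.norm_deriv_le,
            hf.norm_le, hg.norm_deriv_deriv_le]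
      _ = (β + β') ^ 2 * (A * A') := by ring

lemma finset_prod {ι : Type*} {f : ι → ℝ → ℂ} {A β : ι → ℝ} (s : Finset ι)
    (hf : ∀ i ∈ s, TwoJetBound (f i) t (A i) (β i)) :
    TwoJetBound (fun u => ∏ i ∈ s, f i u) t (∏ i ∈ s, A i) (∑ i ∈ s, β i) := by
  induction s using Finset.induction_on with
  | empty => simpa using one t
  | insert i s hi ih =>
    simp only [prod_insert hi, sum_insert hi]
    exact (hf i (mem_insert_self i s)).mul (ih fun j hj => hf j (mem_insert_of_mem hj))

end TwoJetBound

noncomputable def trigSum {α : Type*} (s : Finset α) (c : α → ℂ) (μ : α → ℝ) (u : ℝ) : ℂ :=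
  ∑ a ∈ s, c a * Complex.exp (Complex.I * u * μ a)

section trigSum

variable {α : Type*} (s : Finset α) (c : α → ℂ) (μ : α → ℝ)

lemma hasDerivAt_trigSum (t : ℝ) :
    HasDerivAt (trigSum s c μ) (trigSum s (fun a => c a * (Complex.I * μ a)) μ t) t := by
  refine HasDerivAt.fun_sum (F := ℂ) fun a _ => ?_
  have hlin : HasDerivAt (fun u : ℝ => Complex.I * u * μ a) (Complex.I * μ a) t := by
    simpa using ((hasDerivAt_id (t : ℂ)).const_mul Complex.I).mul_const (μ a : ℂ)
      |>.comp_ofReal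
  exact (hlin.cexp.const_mul (c a)).congr_deriv (by ring)

lemma deriv_trigSum :
    deriv (trigSum s c μ) = trigSum s (fun a => c a * (Complex.I * μ a)) μ :=
  funext fun t => (hasDerivAt_trigSum s c μ t).deriv

lemma norm_trigSum_le (t : ℝ) : ‖trigSum s c μ t‖ ≤ ∑ a ∈ s, ‖c a‖ := by
  refine (norm_sum_le _ _).trans (sum_le_sum fun a _ => ?_)
  rw [norm_mul, show Complex.I * t * μ a = ((t * μ a : ℝ) : ℂ) * Complex.I by push_cast; ring,
    Complex.norm_exp_ofReal_mul_I, mul_one]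

lemma twoJetBound_trigSum {K : ℝ} (hμ : ∀ a ∈ s, |μ a| ≤ K) (t : ℝ) :
    TwoJetBound (trigSum s c μ) t (∑ a ∈ s, ‖c a‖) K := by
  have hμ' : ∀ a ∈ s, ‖Complex.I * μ a‖ ≤ K := fun a ha => by simpa using hμ a ha
  refine ⟨fun u => (hasDerivAt_trigSum s c μ u).differentiableAt, ?_, norm_trigSum_le s c μ t,
    ?_, ?_⟩
  · rw [deriv_trigSum]
    exact fun u => (hasDerivAt_trigSum s _ μ u).differentiableAt
  · rw [deriv_trigSum, mul_sum]
    refine (norm_trigSum_le s _ μ t).trans (sum_le_sum fun a ha => ?_)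
    rw [norm_mul, mul_comm]
    exact mul_le_mul_of_nonneg_right (hμ' a ha) (norm_nonneg _)
  · rw [deriv_trigSum, deriv_trigSum, mul_sum]
    refine (norm_trigSum_le s _ μ t).trans (sum_le_sum fun a ha => ?_)
    rw [norm_mul, norm_mul, mul_assoc, mul_comm, sq]
    exact mul_le_mul_of_nonneg_right
      (mul_self_le_mul_self (norm_nonneg _) (hμ' a ha)) (norm_nonneg _)

end trigSum

lemma sq_le_exp_of_nonneg {x : ℝ} (hx : 0 ≤ x) : x ^ 2 ≤ Real.exp x := by
  have h := Real.sum_le_exp_of_nonneg hx 4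
  simp only [sum_range_succ, sum_range_zero, Nat.factorial] at h
  nlinarith [mul_nonneg hx (sq_nonneg (x - 3 / 2))]

section Activity

variable {V : Type*} [DecidableEq V] (a b : ℤ) (p : V → ℤ → ℝ) (J : V → V → ℝ)
  (hJ : ∀ x y, J x y = J y x) {σ δ t : ℝ}

lemma xi_singleton_eq (x : V) (hpx : ∑ z ∈ Icc a b, p x z = 1) :
    xi a b p J hJ {x} =
      fun u => trigSum (Icc a b) (fun z => (p x z : ℂ)) (fun z => (z : ℝ)) u - 1 := by
  funext u
  have hpx' : ∑ z ∈ Icc a b, (p x z : ℂ) = 1 := by exact_mod_cast congrArg Complex.ofReal hpx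
  simp only [xi, card_singleton, if_true, sum_singleton, trigSum, Complex.ofReal_intCast,
    sub_mul, one_mul, sum_sub_distrib, hpx']
  exact congrArg (· - 1) (sum_congr rfl fun z _ => mul_comm _ _)

lemma xi_eq_trigSum (R : Finset V) (hR : R.card ≠ 1) :
    xi a b p J hJ R = trigSum (Fintype.piFinset fun _ : ↥R => Icc a b)
      (fun s => (∑ g ∈ connGraphs ↥R, edgeProd (fun x y : ↥R => J ↑x ↑y) (fun x y => hJ ↑x ↑y)
          (fun x : ↥R => (s x : ℝ)) g) * ∏ x : ↥R, (p ↑x (s x) : ℂ))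
      (fun s => ∑ x : ↥R, (s x : ℝ)) := by
  funext u
  simp only [xi, if_neg hR, trigSum]
  refine sum_congr rfl fun s _ => ?_
  have hsubsets : ∑ S ∈ (univ : Finset ↥R).powerset,
      ∏ x ∈ S, (Complex.exp (Complex.I * u * (s x : ℤ)) - 1)
      = Complex.exp (Complex.I * u * ((∑ x : ↥R, (s x : ℝ) : ℝ) : ℂ)) := by
    rw [← prod_one_add, Complex.ofReal_sum, mul_sum, Complex.exp_sum]
    simp
  rw [← hsubsets, mul_sum, sum_comm]
  refine sum_congr rfl fun S _ => ?_
  rw [sum_mul, sum_mul]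
  exact sum_congr rfl fun g _ => by ring

lemma norm_xi_singleton_le (x : V) (hpx0 : ∀ z ∈ Icc a b, 0 ≤ p x z)
    (hpx1 : ∑ z ∈ Icc a b, p x z = 1) (hσ : ∀ z ∈ Icc a b, |(z : ℝ)| ≤ σ) (ht : |t| ≤ δ) :
    ‖xi a b p J hJ {x} t‖ ≤ δ * σ := by
  simp only [xi, card_singleton, if_true, sum_singleton]
  calc _ ≤ ∑ z ∈ Icc a b, δ * σ * p x z := by
        refine (norm_sum_le _ _).trans (sum_le_sum fun z hz => ?_)
        rw [norm_mul, Complex.norm_real, Real.norm_of_nonneg (hpx0 z hz),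
          show Complex.I * t * z = Complex.I * ((t * z : ℝ) : ℂ) by push_cast; ring]
        refine mul_le_mul_of_nonneg_right (Real.norm_exp_I_mul_ofReal_sub_one_le.trans ?_)
          (hpx0 z hz)
        rw [Real.norm_eq_abs, abs_mul]
        exact mul_le_mul ht (hσ z hz) (abs_nonneg _) ((abs_nonneg _).trans ht)
    _ = δ * σ := by rw [← mul_sum, hpx1, mul_one]

lemma twoJetBound_xi_singleton (x : V) (hpx0 : ∀ z ∈ Icc a b, 0 ≤ p x z)
    (hpx1 : ∑ z ∈ Icc a b, p x z = 1) (hσ : ∀ z ∈ Icc a b, |(z : ℝ)| ≤ σ) (hσ1 : 1 ≤ σ)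
    (hδ0 : 0 < δ) (hδ1 : δ ≤ 1) (ht : |t| ≤ δ) :
    TwoJetBound (xi a b p J hJ {x}) t (δ * σ) (σ / δ) := by
  have hvalue := norm_xi_singleton_le a b p J hJ x hpx0 hpx1 hσ ht
  rw [xi_singleton_eq a b p J hJ x hpx1] at hvalue ⊢
  set F := trigSum (Icc a b) (fun z => (p x z : ℂ)) (fun z => (z : ℝ))
  have hF := twoJetBound_trigSum (Icc a b) (fun z => (p x z : ℂ)) (fun z => (z : ℝ)) hσ t
  rw [sum_congr rfl fun z hz => by rw [Complex.norm_real, Real.norm_of_nonneg (hpx0 z hz)],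
    hpx1] at hF
  have hderiv : deriv (fun u => F u - 1) = deriv F := funext fun u => deriv_sub_const 1
  refine ⟨hF.differentiable.sub_const 1, hderiv ▸ hF.differentiable_deriv, hvalue, ?_, ?_⟩
  · rw [hderiv]
    calc _ ≤ σ * 1 := hF.norm_deriv_le
      _ ≤ σ / δ * (δ * σ) := by field_simp; nlinarith
  · rw [hderiv]
    calc _ ≤ σ ^ 2 * 1 := hF.norm_deriv_deriv_le
      _ ≤ (σ / δ) ^ 2 * (δ * σ) := by
        rw [div_pow, div_mul_eq_mul_div, le_div_iff₀ (by positivity)]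
        nlinarith [mul_le_mul_of_nonneg_left (hδ1.trans hσ1) (by positivity : 0 ≤ σ ^ 2 * δ)]

lemma twoJetBound_xi_of_card_ne_one (R : Finset V) (hR : R.card ≠ 1)
    (hp0 : ∀ x, ∀ z ∈ Icc a b, 0 ≤ p x z) (hσ : ∀ z ∈ Icc a b, |(z : ℝ)| ≤ σ) (hσ0 : 0 ≤ σ)
    (hδ0 : 0 < δ) (hδ1 : δ ≤ 1) (t : ℝ) :
    TwoJetBound (xi a b p J hJ R) t (w0 a b δ σ p J hJ R) (σ / δ * R.card) := by
  rw [xi_eq_trigSum a b p J hJ R hR]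
  have hμ : ∀ s ∈ Fintype.piFinset (fun _ : ↥R => Icc a b),
      |∑ x : ↥R, (s x : ℝ)| ≤ σ * R.card := fun s hs => by
    refine (abs_sum_le_sum_abs _ _).trans ((sum_le_card_nsmul _ _ σ fun x _ =>
      hσ _ (Fintype.mem_piFinset.mp hs x)).trans_eq ?_)
    rw [nsmul_eq_mul, card_univ, Fintype.card_coe, mul_comm]
  refine (twoJetBound_trigSum _ _ _ hμ t).mono (by positivity)
    (by gcongr; exact le_div_self hσ0 hδ0 hδ1) ?_
  rw [w0, if_neg hR]
  have hp : ∀ s ∈ Fintype.piFinset (fun _ : ↥R => Icc a b), 0 ≤ ∏ x : ↥R, p ↑x (s x) :=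
    fun s hs => prod_nonneg fun x _ => hp0 _ _ (Fintype.mem_piFinset.mp hs x)
  refine (sum_congr rfl fun s hs => ?_).le.trans (le_mul_of_one_le_left
    (sum_nonneg fun s hs => mul_nonneg (hp s hs) (norm_nonneg _)) (one_le_pow₀ (by nlinarith)))
  rw [norm_mul, mul_comm, ← Complex.ofReal_prod, Complex.norm_real, Real.norm_of_nonneg (hp s hs)]

lemma twoJetBound_xi (R : Finset V)
    (hp0 : ∀ x, ∀ z ∈ Icc a b, 0 ≤ p x z) (hp1 : ∀ x, ∑ z ∈ Icc a b, p x z = 1)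
    (hσ : ∀ z ∈ Icc a b, |(z : ℝ)| ≤ σ) (hσ1 : 1 ≤ σ) (hδ0 : 0 < δ) (hδ1 : δ ≤ 1)
    (ht : |t| ≤ δ) :
    TwoJetBound (xi a b p J hJ R) t (w0 a b δ σ p J hJ R) (σ / δ * R.card) := by
  by_cases hR : R.card = 1
  · obtain ⟨x, rfl⟩ := card_eq_one.mp hR
    simpa only [w0, card_singleton, if_true, Nat.cast_one, mul_one] using
      twoJetBound_xi_singleton a b p J hJ x (hp0 x) (hp1 x) hσ hσ1 hδ0 hδ1 ht
  · exact twoJetBound_xi_of_card_ne_one a b p J hJ R hR hp0 hσ (by linarith) hδ0 hδ1 t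

end Activity

theorem second_deriv_prod_xi_bound_general
    (a b : ℤ) {V : Type*} [DecidableEq V]
    (p : V → ℤ → ℝ)
    (hp0 : ∀ x, ∀ z ∈ Finset.Icc a b, 0 ≤ p x z)
    (hp1 : ∀ x, ∑ z ∈ Finset.Icc a b, p x z = 1)
    (J : V → V → ℝ) (hJ : ∀ x y, J x y = J y x)
    (σ δ : ℝ) (hσ : σ = max |(a : ℝ)| |(b : ℝ)|) (hσ1 : 1 ≤ σ)
    (hδ0 : 0 < δ) (hδ1 : δ < 1)
    (k : ℕ) (R : Fin k → Finset V)
    (t : ℝ) (ht0 : 0 < t) (htδ : t ≤ δ) :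
    ‖(deriv (deriv (fun t : ℝ => ∏ i : Fin k, xi a b p J hJ (R i) t)) t)‖ ≤
      σ ^ 2 / δ ^ 2 *
        ∏ i : Fin k, Real.exp ((R i).card : ℝ) * w0 a b δ σ p J hJ (R i) := by
  have hσI : ∀ z ∈ Icc a b, |(z : ℝ)| ≤ σ := fun z hz => hσ ▸ abs_le_max_abs_abs
    (by exact_mod_cast (mem_Icc.mp hz).1) (by exact_mod_cast (mem_Icc.mp hz).2)
  have hprod := TwoJetBound.finset_prod univ fun i _ =>
    twoJetBound_xi a b p J hJ (R i) hp0 hp1 hσI hσ1 hδ0 hδ1.le (abs_le.mpr ⟨by linarith, htδ⟩)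
  set N : ℝ := ∑ i, ((R i).card : ℝ)
  calc _ ≤ (∑ i, σ / δ * (R i).card) ^ 2 * ∏ i, w0 a b δ σ p J hJ (R i) :=
        hprod.norm_deriv_deriv_le
    _ = σ ^ 2 / δ ^ 2 * (N ^ 2 * ∏ i, w0 a b δ σ p J hJ (R i)) := by rw [← mul_sum]; ring
    _ ≤ σ ^ 2 / δ ^ 2 * (Real.exp N * ∏ i, w0 a b δ σ p J hJ (R i)) := by
        gcongr
        exacts [hprod.nonneg, sq_le_exp_of_nonneg (by positivity)]
    _ = _ := by rw [prod_mul_distrib, ← Real.exp_sum]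

/-- For nonempty subsets `R_1,…,R_k` of a finite set `Λ`,
probability weights `(p_x)`, symmetric `(J_{xy})`, `σ = max_{s∈I}|s| ≥ 1` and
`0 < δ < 1`: for every `t` with `0 < t ≤ δ`,
`|d²/dt² Π_{i=1}^k ξ_t(R_i)| ≤ (σ²/δ²) Π_{i=1}^k (e^{|R_i|} w₀(R_i))`. -/
theorem second_deriv_prod_xi_bound
    (a b : ℤ) (hab : a < b) {V : Type*} [DecidableEq V]
    (Λ : Finset V)
    (p : V → ℤ → ℝ)
    (hp0 : ∀ x, ∀ z ∈ Finset.Icc a b, 0 ≤ p x z)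
    (hp1 : ∀ x, ∑ z ∈ Finset.Icc a b, p x z = 1)
    (J : V → V → ℝ) (hJ : ∀ x y, J x y = J y x)
    (σ δ : ℝ) (hσ : σ = max |(a : ℝ)| |(b : ℝ)|) (hσ1 : 1 ≤ σ)
    (hδ0 : 0 < δ) (hδ1 : δ < 1)
    (k : ℕ) (R : Fin k → Finset V)
    (hRne : ∀ i, (R i).Nonempty) (hRsub : ∀ i, R i ⊆ Λ)
    (t : ℝ) (ht0 : 0 < t) (htδ : t ≤ δ) :
    ‖(deriv (deriv (fun t : ℝ => ∏ i : Fin k, xi a b p J hJ (R i) t)) t)‖ ≤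
      σ ^ 2 / δ ^ 2 *
        ∏ i : Fin k, Real.exp ((R i).card : ℝ) * w0 a b δ σ p J hJ (R i) :=
  second_deriv_prod_xi_bound_general a b p hp0 hp1 J hJ σ δ hσ hσ1 hδ0 hδ1 k R t ht0 htδ

end SpinLCLT
end
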